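/- arXiv:0902.0833 — 4 statements merged into one kernel-verified Lean document; each statement's English description precedes it below -/
import Mathlib

section
/- Every β ∈ B_3^{+*} has at least one code, and the set of all codes of β possesses a greatest element with respect to the ordering <_right. -/
/-- The defining relations of the braid group on `n` strands, inside the free group on
generators indexed by `ℕ`.  Generator `i` corresponds to the Artin generator `σ_i`
(for `1 ≤ i ≤ n-1`); generators with index `0` or `≥ n` are killed. -/
def braidRels (n : ℕ) : Set (FreeGroup ℕ) :=
  {r | (∃ i j : ℕ, 1 ≤ i ∧ i + 2 ≤ j ∧ j ≤ n - 1 ∧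
          r = FreeGroup.of i * FreeGroup.of j * (FreeGroup.of i)⁻¹ * (FreeGroup.of j)⁻¹) ∨
       (∃ i : ℕ, 1 ≤ i ∧ i + 1 ≤ n - 1 ∧
          r = FreeGroup.of i * FreeGroup.of (i+1) * FreeGroup.of i *
              (FreeGroup.of (i+1) * FreeGroup.of i * FreeGroup.of (i+1))⁻¹) ∨
       (∃ i : ℕ, (i = 0 ∨ n ≤ i) ∧ r = FreeGroup.of i)}

/-- The braid group `B_n` on `n` strands. -/
abbrev Braid (n : ℕ) := PresentedGroup (braidRels n)

/-- The Artin generator `σ_i` of `B_n`. -/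
def genσ (n i : ℕ) : Braid n := PresentedGroup.of i

/-- The band generator `a_{i,j} = (σ_{j-1} ⋯ σ_{i+1}) σ_i (σ_{i+1}⁻¹ ⋯ σ_{j-1}⁻¹)`. -/
def band (n i j : ℕ) : Braid n :=
  (((List.range' (i+1) (j-1-i)).reverse.map (genσ n)).prod) * genσ n i *
    (((List.range' (i+1) (j-1-i)).reverse.map (genσ n)).prod)⁻¹

/-- The dual braid monoid `B_n^{+*}`: the submonoid of `B_n` generated by the band
generators `a_{i,j}`, `1 ≤ i < j ≤ n`. -/
def dualMonoid (n : ℕ) : Submonoid (Braid n) :=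
  Submonoid.closure {x | ∃ i j : ℕ, 1 ≤ i ∧ i < j ∧ j ≤ n ∧ x = band n i j}

/-- The submonoid `B_I^{+*}` generated by the band generators `a_{i,j}` with `i, j ∈ I`. -/
def dualMonoidOn (n : ℕ) (I : Set ℕ) : Submonoid (Braid n) :=
  Submonoid.closure {x | ∃ i j : ℕ, i ∈ I ∧ j ∈ I ∧ 1 ≤ i ∧ i < j ∧ j ≤ n ∧ x = band n i j}

/-- Evaluation of a word in the letters `σ_i^{±1}` (a letter is a pair of an index and a
sign, `true` meaning positive). -/
def evalWord (n : ℕ) (w : List (ℕ × Bool)) : Braid n :=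
  (w.map (fun p => if p.2 then genσ n p.1 else (genσ n p.1)⁻¹)).prod

/-- `γ` is `σ_i`-positive: it is represented by a word in the letters `σ_1^{±1}, …,
σ_{n-1}^{±1}` containing at least one `σ_i`, no `σ_i⁻¹`, and no `σ_j^{±1}` with `j < i`. -/
def SigmaPositive (n i : ℕ) (γ : Braid n) : Prop :=
  ∃ w : List (ℕ × Bool),
    (∀ p ∈ w, 1 ≤ p.1 ∧ p.1 ≤ n - 1) ∧
    (i, true) ∈ w ∧ (i, false) ∉ w ∧
    (∀ p ∈ w, i ≤ p.1) ∧
    evalWord n w = γ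

/-- The Dehornoy ordering on `B_n`: `α <_D β` iff `α⁻¹β` is `σ_i`-positive for some `i`. -/
def dehornoyLt (n : ℕ) (α β : Braid n) : Prop :=
  ∃ i : ℕ, 1 ≤ i ∧ i ≤ n - 1 ∧ SigmaPositive n i (α⁻¹ * β)

/-- For `t ≥ -1`: `g_t = a_{1,2}` if `t ≡ 0 (mod 3)`, `g_t = a_{1,3}` if `t ≡ 1`,
and `g_t = a_{2,3}` if `t ≡ 2`. -/
def g3 (t : ℤ) : Braid 3 :=
  if t % 3 = 0 then band 3 1 2 else if t % 3 = 1 then band 3 1 3 else band 3 2 3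

/-- The product `g_t^{c_t} g_{t-1}^{c_{t-1}} ⋯ g_0^{c_0} g_{-1}^{c_{-1}}` (for `t ≥ -1`). -/
def tailProd3 (c : ℤ → ℕ) (t : ℤ) : Braid 3 :=
  ((List.range (t + 2).toNat).map (fun k => g3 (t - k) ^ c (t - k))).prod

/-- `c` is a code of `β ∈ B_3^{+*}`: `c` vanishes below `-1`, and for some `m` with
`c_t = 0` for all `t > m` one has `β = g_m^{c_m} ⋯ g_{-1}^{c_{-1}}`. -/
def IsCode3 (β : Braid 3) (c : ℤ → ℕ) : Prop :=
  (∀ t : ℤ, t < -1 → c t = 0) ∧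
  ∃ m : ℕ, (∀ t : ℤ, (m : ℤ) < t → c t = 0) ∧ β = tailProd3 c (m : ℤ)

/-- `c <_left c'`: at the largest index `l` where they differ, `c_l < c'_l`. -/
def codeLtLeft (c c' : ℤ → ℕ) : Prop :=
  ∃ l : ℤ, c l < c' l ∧ ∀ t : ℤ, l < t → c t = c' t

/-- `c <_right c'`: at the smallest index `l` where they differ, `c_l < c'_l`. -/
def codeLtRight (c c' : ℤ → ℕ) : Prop :=
  ∃ l : ℤ, c l < c' l ∧ ∀ t : ℤ, t < l → c t = c' t

/-- `c` is the `<_right`-greatest code of `β`. -/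
def IsGreatestCode3 (β : Braid 3) (c : ℤ → ℕ) : Prop :=
  IsCode3 β c ∧ ∀ c' : ℤ → ℕ, IsCode3 β c' → c' ≠ c → codeLtRight c' c

/-! The degree homomorphism `B_3 → ℤ` sends every band generator to `1`, so all codes of `β`
have the same total sum, namely the degree of `β`. Hence the `<_right`-greatest code can be
chosen greedily: maximise `c_{-1}`, then `c_0`, and so on, each time among the codes agreeing
with the choices already made. The bounded sum makes every maximum exist and forces the greedy
values to vanish from some index `T` on; a code realising the first `T` greedy values is then the
whole greedy sequence. A code exists at all because `g_s β` has a code as soon as `β` does: put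
one more letter into a free slot above the top index of the code, in the residue class of `s`. -/

open Finset Multiplicative

section LexGreatest

variable (S : Set (ℕ → ℕ))

def lexSlice : ℕ → Set (ℕ → ℕ)
  | 0 => S
  | n + 1 => {f ∈ lexSlice n | f n = sSup ((fun g => g n) '' lexSlice n)}

noncomputable def lexGreedy (n : ℕ) : ℕ := sSup ((fun g => g n) '' lexSlice S n)

variable {S}

theorem mem_lexSlice_iff {f : ℕ → ℕ} {n : ℕ} :
    f ∈ lexSlice S n ↔ f ∈ S ∧ ∀ k < n, f k = lexGreedy S k := by
  induction n with
  | zero => simp [lexSlice]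
  | succ n ih =>
    rw [lexSlice, Set.mem_sep_iff, ih, Nat.forall_lt_succ_right, and_assoc]
    rfl

theorem bddAbove_lexSlice (hS : ∀ n, BddAbove ((fun g => g n) '' S)) (n : ℕ) :
    BddAbove ((fun g => g n) '' lexSlice S n) :=
  (hS n).mono (Set.image_mono fun _ hf => (mem_lexSlice_iff.1 hf).1)

theorem le_lexGreedy (hS : ∀ n, BddAbove ((fun g => g n) '' S)) {f : ℕ → ℕ} {n : ℕ}
    (hf : f ∈ lexSlice S n) : f n ≤ lexGreedy S n :=
  le_csSup (bddAbove_lexSlice hS n) ⟨f, hf, rfl⟩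

theorem lexSlice_nonempty (hne : S.Nonempty) (hS : ∀ n, BddAbove ((fun g => g n) '' S)) :
    ∀ n, (lexSlice S n).Nonempty
  | 0 => hne
  | n + 1 => by
    obtain ⟨f, hf, hfn⟩ :=
      Nat.sSup_mem ((lexSlice_nonempty hne hS n).image _) (bddAbove_lexSlice hS n)
    exact ⟨f, hf, hfn⟩

theorem exists_forall_ge_eq_zero_of_sum_range_le {f : ℕ → ℕ} {N : ℕ}
    (h : ∀ n, ∑ k ∈ range n, f k ≤ N) : ∃ T, ∀ n ≥ T, f n = 0 := by
  have hbdd : BddAbove (Set.range fun n => ∑ k ∈ range n, f k) :=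
    ⟨N, Set.forall_mem_range.2 h⟩
  obtain ⟨T, hT⟩ := Nat.sSup_mem (Set.range_nonempty _) hbdd
  refine ⟨T, fun n hn => ?_⟩
  have hmax : ∑ k ∈ range (n + 1), f k ≤ ∑ k ∈ range T, f k :=
    (le_csSup hbdd ⟨n + 1, rfl⟩).trans_eq hT.symm
  have hmono := sum_le_sum_of_subset (f := f) (range_subset_range.2 hn)
  rw [sum_range_succ] at hmax
  omega

variable {N : ℕ} (hN : ∀ f ∈ S, ∀ n, ∑ k ∈ range n, f k ≤ N)
include hN

theorem bddAbove_eval_of_sum_range_le (n : ℕ) : BddAbove ((fun g => g n) '' S) := by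
  refine ⟨N, Set.forall_mem_image.2 fun f hf => ?_⟩
  exact (single_le_sum (fun _ _ => Nat.zero_le _) (self_mem_range_succ n)).trans (hN f hf (n + 1))

theorem toLex_le_lexGreedy {g : ℕ → ℕ} (hg : g ∈ S) : toLex g ≤ toLex (lexGreedy S) := by
  classical
  by_cases hgG : g = lexGreedy S
  · rw [hgG]
  have hdiff : ∃ n, g n ≠ lexGreedy S n := Function.ne_iff.1 hgG
  have hagree : ∀ k < Nat.find hdiff, g k = lexGreedy S k := fun k hk =>
    not_not.1 (Nat.find_min hdiff hk)
  have hle := le_lexGreedy (bddAbove_eval_of_sum_range_le hN) (mem_lexSlice_iff.2 ⟨hg, hagree⟩)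
  exact le_of_lt ⟨Nat.find hdiff, hagree, lt_of_le_of_ne hle (Nat.find_spec hdiff)⟩

variable (hne : S.Nonempty)
include hne

theorem sum_range_lexGreedy_le (n : ℕ) : ∑ k ∈ range n, lexGreedy S k ≤ N := by
  obtain ⟨f, hf⟩ := lexSlice_nonempty hne (bddAbove_eval_of_sum_range_le hN) n
  obtain ⟨hfS, hfn⟩ := mem_lexSlice_iff.1 hf
  rw [← sum_congr rfl fun k hk => hfn k (mem_range.1 hk)]
  exact hN f hfS n

theorem lexGreedy_mem : lexGreedy S ∈ S := by
  have hB := bddAbove_eval_of_sum_range_le hN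
  obtain ⟨T, hT⟩ := exists_forall_ge_eq_zero_of_sum_range_le (sum_range_lexGreedy_le hN hne)
  obtain ⟨f, hf⟩ := lexSlice_nonempty hne hB T
  obtain ⟨hfS, hfT⟩ := mem_lexSlice_iff.1 hf
  -- beyond `T` the greedy choice is `0`, which forces every further entry of `f`
  suffices hfg : ∀ n, f n = lexGreedy S n from funext hfg ▸ hfS
  intro n
  induction n using Nat.strong_induction_on with
  | _ n ih =>
    rcases lt_or_ge n T with hnT | hnT
    · exact hfT n hnT
    · have := le_lexGreedy hB (mem_lexSlice_iff.2 ⟨hfS, ih⟩)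
      rw [hT n hnT] at this ⊢
      omega

end LexGreatest

noncomputable def braidDegree (n : ℕ) : Braid n →* Multiplicative ℤ :=
  PresentedGroup.toGroup (f := fun i => if 1 ≤ i ∧ i < n then ofAdd 1 else 1) <| by
    rintro r (⟨i, j, -, -, -, rfl⟩ | ⟨i, hi, hin, rfl⟩ | ⟨i, hi, rfl⟩)
    · simp only [map_mul, map_inv, mul_inv_cancel_comm, mul_inv_cancel]
    · have : 1 ≤ i + 1 ∧ i + 1 < n := by omega
      simp [hi, this, show i < n by omega]
    · simp only [FreeGroup.lift_apply_of]
      rw [if_neg (by omega)]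

theorem braidDegree_genσ {n i : ℕ} (h1 : 1 ≤ i) (hn : i < n) :
    braidDegree n (genσ n i) = ofAdd 1 := by
  simp [braidDegree, genσ, PresentedGroup.toGroup.of, h1, hn]

theorem braidDegree_band {n i j : ℕ} (h1 : 1 ≤ i) (hn : i < n) :
    braidDegree n (band n i j) = ofAdd 1 := by
  rw [band, map_mul, map_mul, map_inv, mul_inv_cancel_comm, braidDegree_genσ h1 hn]

theorem braidDegree_g3 (t : ℤ) : braidDegree 3 (g3 t) = ofAdd 1 := by
  unfold g3
  split_ifs <;> exact braidDegree_band (by norm_num) (by norm_num)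

-- `tailProd3` runs over `List.range` coerced to `List ℤ` through the list monad.
theorem tailProd3_eq_prod (c : ℤ → ℕ) (t : ℤ) :
    tailProd3 c t =
      ((List.range (t + 2).toNat).map fun k : ℕ => g3 (t - k) ^ c (t - k)).prod := by
  simp only [tailProd3, bind_pure_comp, List.map_eq_map, List.map_map]
  rfl

theorem tailProd3_of_lt (c : ℤ → ℕ) {t : ℤ} (ht : t < -1) : tailProd3 c t = 1 := by
  rw [tailProd3_eq_prod, Int.toNat_eq_zero.2 (by omega)]
  rfl

theorem tailProd3_add_one (c : ℤ → ℕ) {t : ℤ} (ht : -2 ≤ t) :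
    tailProd3 c (t + 1) = g3 (t + 1) ^ c (t + 1) * tailProd3 c t := by
  rw [tailProd3_eq_prod, tailProd3_eq_prod, show (t + 1 + 2).toNat = (t + 2).toNat + 1 by omega,
    List.range_succ_eq_map, List.map_cons, List.prod_cons, List.map_map, Nat.cast_zero, sub_zero]
  congr 3 with k
  simp only [Function.comp_apply, Nat.cast_succ, add_sub_add_right_eq_sub]

theorem tailProd3_congr {c c' : ℤ → ℕ} {t : ℤ} (h : ∀ s ≤ t, c s = c' s) :
    tailProd3 c t = tailProd3 c' t := by
  simp only [tailProd3_eq_prod]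
  congr 1
  exact List.map_congr_left fun k _ => by rw [h _ (by omega)]

theorem tailProd3_eq_of_eq_zero {c : ℤ → ℕ} {m t : ℤ} (hm : -2 ≤ m) (hmt : m ≤ t)
    (h : ∀ s, m < s → s ≤ t → c s = 0) : tailProd3 c t = tailProd3 c m := by
  induction t, hmt using Int.leInduction with
  | base => rfl
  | succ t hmt ih =>
    rw [tailProd3_add_one c (by omega), h _ (by omega) le_rfl, pow_zero, one_mul,
      ih fun s hs hst => h s hs (by omega)]

def codeSeq (c : ℤ → ℕ) (k : ℕ) : ℕ := c (k - 1)

theorem codeSeq_toNat (c : ℤ → ℕ) {t : ℤ} (ht : -1 ≤ t) :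
    codeSeq c (t + 1).toNat = c t := by
  rw [codeSeq, Int.toNat_of_nonneg (by omega), add_sub_cancel_right]

theorem toAdd_braidDegree_tailProd3 (c : ℤ → ℕ) {t : ℤ} (ht : -2 ≤ t) :
    toAdd (braidDegree 3 (tailProd3 c t)) = ∑ k ∈ range (t + 2).toNat, codeSeq c k := by
  induction t, ht using Int.leInduction with
  | base => simp [tailProd3_of_lt]
  | succ t ht ih =>
    rw [tailProd3_add_one c ht, map_mul, map_pow, braidDegree_g3, toAdd_mul, toAdd_pow, ih,
      show (t + 1 + 2).toNat = (t + 2).toNat + 1 by omega, sum_range_succ,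
      show t + 2 = t + 1 + 1 by ring, codeSeq_toNat c (by omega), toAdd_ofAdd]
    push_cast
    ring

theorem IsCode3.sum_range_codeSeq_le {β : Braid 3} {c : ℤ → ℕ} (h : IsCode3 β c) (n : ℕ) :
    ∑ k ∈ range n, codeSeq c k ≤ (toAdd (braidDegree 3 β)).toNat := by
  obtain ⟨-, m, hm, rfl⟩ := h
  rw [toAdd_braidDegree_tailProd3 c (by omega), Int.toNat_natCast,
    show ((m : ℤ) + 2).toNat = m + 2 by omega]
  calc ∑ k ∈ range n, codeSeq c k
      ≤ ∑ k ∈ range (m + 2 + n), codeSeq c k :=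
        sum_le_sum_of_subset (range_subset_range.2 (by omega))
    _ = ∑ k ∈ range (m + 2), codeSeq c k := by
      rw [sum_range_add, sum_eq_zero (f := fun k => codeSeq c (m + 2 + k))
        fun k _ => hm _ (by push_cast; omega), add_zero]

theorem isCode3_one : IsCode3 1 0 :=
  ⟨fun _ _ => rfl, 0, fun _ _ => rfl, by simp [tailProd3_eq_prod]⟩

theorem g3_eq_of_emod_eq {s t : ℤ} (h : s % 3 = t % 3) : g3 s = g3 t := by
  rw [g3, g3, h]

theorem IsCode3.exists_g3_mul {β : Braid 3} {c : ℤ → ℕ} (h : IsCode3 β c) (s : ℤ) :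
    ∃ c', IsCode3 (g3 s * β) c' := by
  obtain ⟨hlow, m, hm, rfl⟩ := h
  -- the new factor goes into the first slot above `m` carrying the generator `g3 s`
  obtain ⟨u, hmu, hum, hus⟩ : ∃ u : ℕ, m < u ∧ u ≤ m + 3 ∧ (u : ℤ) % 3 = s % 3 :=
    ⟨(m + 1 + (s - m - 1) % 3).toNat, by omega, by omega, by omega⟩
  refine ⟨Function.update c u 1, fun t ht => ?_, u, fun t ht => ?_, ?_⟩
  · rw [Function.update_of_ne (by omega)]
    exact hlow t ht
  · rw [Function.update_of_ne (by omega)]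
    exact hm t (by omega)
  have hsplit := tailProd3_add_one (Function.update c u 1) (t := u - 1) (by omega)
  rw [sub_add_cancel, Function.update_self, pow_one] at hsplit
  have hbelow : tailProd3 (Function.update c u 1) (u - 1) = tailProd3 c (u - 1) :=
    tailProd3_congr fun t ht => Function.update_of_ne (by omega) _ _
  rw [hsplit, hbelow, g3_eq_of_emod_eq hus,
    tailProd3_eq_of_eq_zero (m := m) (t := u - 1) (by omega) (by omega) fun t ht _ => hm t ht]

theorem exists_isCode3 {β : Braid 3} (hβ : β ∈ dualMonoid 3) : ∃ c, IsCode3 β c := by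
  induction hβ using Submonoid.closure_induction_left with
  | one => exact ⟨0, isCode3_one⟩
  | mul_left x hx y _ ih =>
    obtain ⟨i, j, hi, hij, hj, rfl⟩ := hx
    obtain ⟨c, hc⟩ := ih
    obtain ⟨s, hs⟩ : ∃ s, band 3 i j = g3 s := by
      interval_cases j <;> interval_cases i
      exacts [⟨0, rfl⟩, ⟨1, rfl⟩, ⟨2, rfl⟩]
    exact hs ▸ hc.exists_g3_mul s

theorem codeSeq_injOn : Set.InjOn codeSeq {c | ∀ t < -1, c t = 0} := by
  intro c hc c' hc' h
  funext t
  rcases lt_or_ge t (-1) with ht | ht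
  · rw [hc t ht, hc' t ht]
  · rw [← codeSeq_toNat c ht, ← codeSeq_toNat c' ht, h]

theorem codeLtRight_of_toLex_lt {c c' : ℤ → ℕ} (hc : ∀ t < -1, c t = 0)
    (hc' : ∀ t < -1, c' t = 0) (h : toLex (codeSeq c) < toLex (codeSeq c')) :
    codeLtRight c c' := by
  obtain ⟨k, hk, hlt⟩ := h
  refine ⟨k - 1, hlt, fun t ht => ?_⟩
  rcases lt_or_ge t (-1) with ht1 | ht1
  · rw [hc t ht1, hc' t ht1]
  · rw [← codeSeq_toNat c ht1, ← codeSeq_toNat c' ht1]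
    exact hk _ (by omega)

/-- Theorem: every `β ∈ B_3^{+*}` has at least one code, and the set of codes of `β`
has a greatest element with respect to `<_right`. -/
theorem exists_greatest_code (β : Braid 3) (hβ : β ∈ dualMonoid 3) :
    (∃ c : ℤ → ℕ, IsCode3 β c) ∧ ∃ c : ℤ → ℕ, IsGreatestCode3 β c := by
  obtain ⟨c₀, hc₀⟩ := exists_isCode3 hβ
  set S := codeSeq '' {c | IsCode3 β c}
  have hne : S.Nonempty := ⟨_, c₀, hc₀, rfl⟩
  have hN : ∀ f ∈ S, ∀ n, ∑ k ∈ range n, f k ≤ (toAdd (braidDegree 3 β)).toNat := by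
    rintro _ ⟨c, hc, rfl⟩ n
    exact hc.sum_range_codeSeq_le n
  obtain ⟨c, hc, hcG⟩ := lexGreedy_mem hN hne
  refine ⟨⟨c₀, hc₀⟩, c, hc, fun c' hc' hne' => codeLtRight_of_toLex_lt hc'.1 hc.1 ?_⟩
  refine lt_of_le_of_ne (hcG ▸ toLex_le_lexGreedy hN ⟨c', hc', rfl⟩) fun h => hne' ?_
  exact codeSeq_injOn hc'.1 hc.1 (toLex.injective h)
end

section
/- (Push-off formula.) Let 1 ≤ i ≤ j ≤ p < q ≤ n and let β ∈ B_{{i,i+1,…,j}}^{+*}. Then there exists β' ∈ B_{{i,i+1,…,q}}^{+*} such that a_{p,q} β = β' a_{p,q} in B_n. -/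
/-
Writing `δ_{x,y} = σ_{y-1} ⋯ σ_x`, one has `a_{x,y} = δ_{x,y} δ_{x+1,y}⁻¹` and
`δ_{k,q} = δ_{p,q} δ_{k,p}`. Hence for `k < p < q` the band `a_{k,q}` is the conjugate of
`a_{k,p}` by `δ_{p,q}`, and since `a_{k,p}` commutes with the far word `δ_{p+1,q}`, this gives
`a_{p,q} a_{k,p} = a_{k,q} a_{p,q}`. Bands `a_{k,l}` with `l < p` commute with `a_{p,q}`.
These two facts handle the generators of `B_{{i,…,j}}^{+*}`, and the set of `β` that can be
pushed through `a_{p,q}` is closed under products. Only the far commutation relations are used.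
-/

theorem Submonoid.exists_mul_eq_mul_of_mem_closure {M : Type*} [Monoid M] {S : Set M}
    {N : Submonoid M} {a : M} (hS : ∀ s ∈ S, ∃ s' ∈ N, a * s = s' * a) {x : M}
    (hx : x ∈ Submonoid.closure S) : ∃ x' ∈ N, a * x = x' * a := by
  induction hx using Submonoid.closure_induction with
  | mem s hs => exact hS s hs
  | one => exact ⟨1, N.one_mem, by rw [mul_one, one_mul]⟩
  | mul x y _ _ ihx ihy =>
    obtain ⟨x', hx', ex⟩ := ihx
    obtain ⟨y', hy', ey⟩ := ihy
    exact ⟨x' * y', N.mul_mem hx' hy', by rw [← mul_assoc, ex, mul_assoc, ey, mul_assoc]⟩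

namespace Braid

variable {n : ℕ}

theorem genσ_eq_one {i : ℕ} (hi : i = 0 ∨ n ≤ i) : genσ n i = 1 :=
  PresentedGroup.one_of_mem (Or.inr (Or.inr ⟨i, hi, rfl⟩))

/-- Far generators commute; this also covers the killed generators `σ_0` and `σ_m`, `m ≥ n`. -/
theorem genσ_commute {a b : ℕ} (hab : a + 2 ≤ b) : Commute (genσ n a) (genσ n b) := by
  rcases Nat.eq_zero_or_pos a with rfl | ha
  · rw [genσ_eq_one (Or.inl rfl)]
    exact Commute.one_left _
  rcases le_or_gt n b with hb | hb
  · rw [genσ_eq_one (Or.inr hb)]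
    exact Commute.one_right _
  have h : genσ n a * genσ n b * (genσ n a)⁻¹ * (genσ n b)⁻¹ = 1 :=
    PresentedGroup.one_of_mem (Or.inl ⟨a, b, ha, hab, by omega, rfl⟩)
  exact commutatorElement_eq_one_iff_commute.mp h

variable (n) in
/-- `δ_{x,y} = σ_{y-1} σ_{y-2} ⋯ σ_x`, the empty product when `y ≤ x`. -/
def descProd (x y : ℕ) : Braid n :=
  ((List.range' x (y - x)).reverse.map (genσ n)).prod

theorem descProd_mul_descProd {k p q : ℕ} (hkp : k ≤ p) (hpq : p ≤ q) :
    descProd n p q * descProd n k p = descProd n k q := by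
  have h : List.range' k (p - k) ++ List.range' p (q - p) = List.range' k (q - k) := by
    have := List.range'_append_1 (s := k) (m := p - k) (n := q - p)
    rwa [Nat.add_sub_cancel' hkp, Nat.add_comm, Nat.sub_add_sub_cancel hpq hkp] at this
  rw [descProd, descProd, descProd, ← h, List.reverse_append, List.map_append, List.prod_append]

theorem descProd_succ (x : ℕ) : descProd n x (x + 1) = genσ n x := by
  simp [descProd]

theorem commute_descProd {x y u v : ℕ} (hyu : y < u) :
    Commute (descProd n x y) (descProd n u v) := by
  refine Commute.list_prod_left _ _ fun g hg => Commute.list_prod_right _ _ fun g' hg' => ?_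
  simp only [List.mem_map, List.mem_reverse, List.mem_range'_1] at hg hg'
  obtain ⟨m, hm, rfl⟩ := hg
  obtain ⟨m', hm', rfl⟩ := hg'
  exact genσ_commute (by omega)

theorem band_eq_descProd_mul_inv {x y : ℕ} (hxy : x < y) :
    band n x y = descProd n x y * (descProd n (x + 1) y)⁻¹ := by
  rw [← descProd_mul_descProd (Nat.le_succ x) hxy, descProd_succ]
  rw [band, Nat.sub_sub, Nat.add_comm 1 x]
  rfl

theorem commute_band_descProd {k l u v : ℕ} (hkl : k < l) (hlu : l < u) :
    Commute (band n k l) (descProd n u v) := by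
  rw [band_eq_descProd_mul_inv hkl]
  exact (commute_descProd hlu).mul_left (commute_descProd hlu).inv_left

theorem band_commute {k l p q : ℕ} (hkl : k < l) (hlp : l < p) (hpq : p < q) :
    Commute (band n k l) (band n p q) := by
  rw [band_eq_descProd_mul_inv (x := p) hpq]
  exact (commute_band_descProd hkl hlp).mul_right
    (commute_band_descProd hkl (Nat.lt_succ_of_lt hlp)).inv_right

theorem band_eq_conj_band {k p q : ℕ} (hkp : k < p) (hpq : p < q) :
    band n k q = descProd n p q * band n k p * (descProd n p q)⁻¹ := by
  rw [band_eq_descProd_mul_inv (hkp.trans hpq), band_eq_descProd_mul_inv hkp,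
    ← descProd_mul_descProd hkp.le hpq.le, ← descProd_mul_descProd hkp hpq.le]
  group

theorem band_mul_band {k p q : ℕ} (hkp : k < p) (hpq : p < q) :
    band n p q * band n k p = band n k q * band n p q := by
  have hc : Commute (band n k p) (descProd n (p + 1) q) :=
    commute_band_descProd hkp (Nat.lt_succ_self p)
  rw [band_eq_conj_band hkp hpq, band_eq_descProd_mul_inv hpq]
  calc descProd n p q * (descProd n (p + 1) q)⁻¹ * band n k p
      = descProd n p q * (band n k p * (descProd n (p + 1) q)⁻¹) := by
        rw [mul_assoc, hc.inv_right.eq]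
    _ = descProd n p q * band n k p * (descProd n p q)⁻¹ *
          (descProd n p q * (descProd n (p + 1) q)⁻¹) := by group

end Braid

open Braid in
theorem pushoff_formula_general (n i j p q : ℕ) (hjp : j ≤ p)
    (hpq : p < q) (hqn : q ≤ n) (β : Braid n) (hβ : β ∈ dualMonoidOn n (Set.Icc i j)) :
    ∃ β' ∈ dualMonoidOn n (Set.Icc i q), band n p q * β = β' * band n p q := by
  refine Submonoid.exists_mul_eq_mul_of_mem_closure (fun x hx => ?_) hβ
  obtain ⟨k, l, hk, hl, hk1, hkl, hln, rfl⟩ := hx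
  rcases (hl.2.trans hjp).lt_or_eq with hlp | rfl
  · refine ⟨band n k l, Submonoid.subset_closure ?_, (band_commute hkl hlp hpq).eq.symm⟩
    exact ⟨k, l, ⟨hk.1, by omega⟩, ⟨hl.1, by omega⟩, hk1, hkl, hln, rfl⟩
  · refine ⟨band n k q, Submonoid.subset_closure ?_, band_mul_band hkl hpq⟩
    exact ⟨k, q, ⟨hk.1, by omega⟩, ⟨by have := hk.1; omega, le_rfl⟩, hk1, hkl.trans hpq, hqn, rfl⟩

/-- Theorem (push-off formula): for `1 ≤ i ≤ j ≤ p < q ≤ n` and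
`β ∈ B_{{i,…,j}}^{+*}`, there exists `β' ∈ B_{{i,…,q}}^{+*}` with
`a_{p,q} β = β' a_{p,q}`. -/
theorem pushoff_formula (n i j p q : ℕ) (h1 : 1 ≤ i) (hij : i ≤ j) (hjp : j ≤ p)
    (hpq : p < q) (hqn : q ≤ n) (β : Braid n) (hβ : β ∈ dualMonoidOn n (Set.Icc i j)) :
    ∃ β' ∈ dualMonoidOn n (Set.Icc i q), band n p q * β = β' * band n p q :=
  pushoff_formula_general n i j p q hjp hpq hqn β hβ
end

section
/- For all indices 1 ≤ i < j ≤ n and 1 ≤ r < s ≤ n satisfying (j − s)(j − r)(i − s)(i − r) > 0, the band generators commute in B_n: a_{i,j} a_{r,s} = a_{r,s} a_{i,j}. -/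


lemma rel_one {n : ℕ} {r : FreeGroup ℕ} (hr : r ∈ braidRels n) :
    PresentedGroup.mk (braidRels n) r = 1 :=
  (QuotientGroup.eq_one_iff r).2 (Subgroup.subset_normalClosure hr)

lemma gen_kill {n k : ℕ} (h : k = 0 ∨ n ≤ k) : genσ n k = 1 :=
  rel_one (Or.inr (Or.inr ⟨k, h, rfl⟩))

lemma comm_rel {n a b : ℕ} (h1 : 1 ≤ a) (h2 : a + 2 ≤ b) (h3 : b ≤ n - 1) :
    Commute (genσ n a) (genσ n b) := by
  have h' := rel_one (n := n) (Or.inl ⟨a, b, h1, h2, h3, rfl⟩)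
  simp only [map_mul, map_inv] at h'
  have h'' : genσ n a * genσ n b * (genσ n a)⁻¹ = genσ n b := mul_inv_eq_one.mp h'
  have := mul_inv_eq_iff_eq_mul.mp h''
  exact this

lemma far {n : ℕ} (a b : ℕ) (h : a + 2 ≤ b) : Commute (genσ n a) (genσ n b) := by
  rcases Nat.eq_zero_or_pos a with ha | ha
  · rw [ha, gen_kill (Or.inl rfl)]; exact Commute.one_left _
  rcases le_or_gt n b with hb | hb
  · rw [gen_kill (Or.inr hb)]; exact Commute.one_right _
  exact comm_rel ha h (by omega)

lemma braid_rel {n a : ℕ} (h1 : 1 ≤ a) (h2 : a + 2 ≤ n) :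
    genσ n a * genσ n (a+1) * genσ n a = genσ n (a+1) * genσ n a * genσ n (a+1) := by
  have h' := rel_one (n := n) (Or.inr (Or.inl ⟨a, h1, by omega, rfl⟩))
  simp only [map_mul, map_inv] at h'
  exact mul_inv_eq_one.mp h'

/-- descending product `σ_{j-1} ⋯ σ_{i+1}` -/
def Cw (n i j : ℕ) : Braid n := ((List.range' (i+1) (j-1-i)).reverse.map (genσ n)).prod

lemma band_eq (n i j : ℕ) : band n i j = Cw n i j * genσ n i * (Cw n i j)⁻¹ := rfl

lemma Cw_empty {n i j : ℕ} (h : j ≤ i + 1) : Cw n i j = 1 := by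
  unfold Cw
  have : j - 1 - i = 0 := by omega
  simp [this]

lemma Cw_succ {n i j : ℕ} (h : i + 1 ≤ j) : Cw n i (j+1) = genσ n j * Cw n i j := by
  unfold Cw
  have h1 : (j+1) - 1 - i = (j - 1 - i) + 1 := by omega
  have h2 : (i+1) + (j - 1 - i) = j := by omega
  rw [h1, List.range'_1_concat, h2]
  simp

lemma commC {n : ℕ} (x : Braid n) (i j : ℕ)
    (hx : ∀ k, i + 1 ≤ k → k < j → Commute x (genσ n k)) : Commute x (Cw n i j) := by
  apply Commute.list_prod_right
  intro y hy
  simp only [List.mem_map, List.mem_reverse] at hy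
  obtain ⟨k, hk, rfl⟩ := hy
  rw [List.mem_range'] at hk
  obtain ⟨m, hm, rfl⟩ := hk
  exact hx _ (by omega) (by omega)

lemma commBand {n : ℕ} (x : Braid n) (i j : ℕ)
    (hx : ∀ k, i ≤ k → k < j → Commute x (genσ n k)) (hij : i < j) :
    Commute x (band n i j) := by
  have hC : Commute x (Cw n i j) := commC x i j fun k h1 h2 => hx k (by omega) h2
  have hσ : Commute x (genσ n i) := hx i le_rfl hij
  rw [band_eq]
  exact (hC.mul_right hσ).mul_right hC.inv_right

lemma disj {n a b c d : ℕ} (hab : a < b) (hcd : c < d) (hbc : b < c) :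
    Commute (band n a b) (band n c d) := by
  apply commBand _ c d _ hcd
  intro k hk1 hk2
  apply Commute.symm
  apply commBand _ a b _ hab
  intro m hm1 hm2
  exact (far m k (by omega)).symm

lemma shiftC {n i : ℕ} (hi : 1 ≤ i) :
    ∀ j, j ≤ n → ∀ k, i + 1 ≤ k → k + 2 ≤ j →
      Cw n i j * genσ n (k+1) = genσ n k * Cw n i j := by
  intro j
  induction j with
  | zero => intro _ k _ hk; omega
  | succ j ih =>
    intro hjn k hk1 hk2
    rw [Cw_succ (by omega)]
    rcases Nat.lt_or_ge (k + 2) (j + 1) with hlt | hge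
    · -- k + 2 ≤ j
      have h1 := ih (by omega) k hk1 (by omega)
      rw [mul_assoc, h1, ← mul_assoc, ← (far k j (by omega)).eq, mul_assoc]
    · -- k + 1 = j
      have hkj : j = k + 1 := by omega
      subst hkj
      rw [Cw_succ (by omega)]
      have hc : Commute (genσ n (k+1)) (Cw n i k) := by
        apply commC
        intro m hm1 hm2
        exact (far m (k+1) (by omega)).symm
      have hb := braid_rel (n := n) (a := k) (by omega) (by omega)
      calc genσ n (k+1) * (genσ n k * Cw n i k) * genσ n (k+1)
          = genσ n (k+1) * genσ n k * (Cw n i k * genσ n (k+1)) := by group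
        _ = genσ n (k+1) * genσ n k * (genσ n (k+1) * Cw n i k) := by rw [hc.eq]
        _ = genσ n (k+1) * genσ n k * genσ n (k+1) * Cw n i k := by group
        _ = genσ n k * genσ n (k+1) * genσ n k * Cw n i k := by rw [← hb]
        _ = genσ n k * (genσ n (k+1) * (genσ n k * Cw n i k)) := by group

lemma conjCw {n i j r : ℕ} (hi : 1 ≤ i) (hir : i + 1 ≤ r) (hjn : j ≤ n) :
    ∀ s, s + 1 ≤ j → Cw n i j * Cw n (r+1) (s+1) = Cw n r s * Cw n i j := by
  intro s
  induction s with
  | zero =>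
    intro _
    rw [show Cw n (r+1) (0+1) = 1 from Cw_empty (by omega),
        show Cw n r 0 = 1 from Cw_empty (by omega), one_mul, mul_one]
  | succ s ih =>
    intro hsj
    rcases Nat.lt_or_ge s (r+1) with hlt | hge
    · rw [show Cw n (r+1) (s+1+1) = 1 from Cw_empty (by omega),
          show Cw n r (s+1) = 1 from Cw_empty (by omega), one_mul, mul_one]
    · have e1 : Cw n (r+1) (s+1+1) = genσ n (s+1) * Cw n (r+1) (s+1) := Cw_succ (by omega)
      have e2 : Cw n r (s+1) = genσ n s * Cw n r s := Cw_succ (by omega)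
      rw [e1, e2]
      have hshift := shiftC hi j hjn s (by omega) (by omega)
      calc Cw n i j * (genσ n (s+1) * Cw n (r+1) (s+1))
          = (Cw n i j * genσ n (s+1)) * Cw n (r+1) (s+1) := by group
        _ = (genσ n s * Cw n i j) * Cw n (r+1) (s+1) := by rw [hshift]
        _ = genσ n s * (Cw n i j * Cw n (r+1) (s+1)) := by group
        _ = genσ n s * (Cw n r s * Cw n i j) := by rw [ih (by omega)]
        _ = genσ n s * Cw n r s * Cw n i j := by group

lemma nested {n i j r s : ℕ} (hi : 1 ≤ i) (hir : i < r) (hrs : r < s) (hsj : s < j)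
    (hjn : j ≤ n) : band n i j * band n r s = band n r s * band n i j := by
  set C := Cw n i j with hC
  have hQ : C * Cw n (r+1) (s+1) = Cw n r s * C := conjCw hi hir hjn s (by omega)
  have hσr : C * genσ n (r+1) = genσ n r * C := shiftC hi j hjn r hir (by omega)
  have hQ' : Cw n (r+1) (s+1) = C⁻¹ * (Cw n r s * C) := by
    rw [← hQ]; group
  have hσ' : genσ n (r+1) = C⁻¹ * (genσ n r * C) := by
    rw [← hσr]; group
  have hb : band n r s = C * band n (r+1) (s+1) * C⁻¹ := by
    rw [band_eq n (r+1) (s+1), band_eq n r s, hQ', hσ']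
    group
  have hcomm : genσ n i * band n (r+1) (s+1) = band n (r+1) (s+1) * genσ n i := by
    apply Commute.eq
    apply commBand _ (r+1) (s+1) _ (by omega)
    intro k hk1 hk2
    exact far i k (by omega)
  rw [hb, band_eq n i j, ← hC]
  calc C * genσ n i * C⁻¹ * (C * band n (r+1) (s+1) * C⁻¹)
      = C * (genσ n i * band n (r+1) (s+1)) * C⁻¹ := by group
    _ = C * (band n (r+1) (s+1) * genσ n i) * C⁻¹ := by rw [hcomm]
    _ = C * band n (r+1) (s+1) * C⁻¹ * (C * genσ n i * C⁻¹) := by group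

/-- Theorem: band generators `a_{i,j}` and `a_{r,s}` commute in `B_n` whenever
`(j-s)(j-r)(i-s)(i-r) > 0`. -/
theorem band_commute (n i j r s : ℕ) (h1i : 1 ≤ i) (hij : i < j) (hjn : j ≤ n)
    (h1r : 1 ≤ r) (hrs : r < s) (hsn : s ≤ n)
    (h : 0 < ((j : ℤ) - s) * ((j : ℤ) - r) * ((i : ℤ) - s) * ((i : ℤ) - r)) :
    band n i j * band n r s = band n r s * band n i j := by
  have hir : i ≠ r := by rintro rfl; simp at h
  have his : i ≠ s := by rintro rfl; simp at h
  have hjr : j ≠ r := by rintro rfl; simp at h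
  have hjs : j ≠ s := by rintro rfl; simp at h
  rcases Nat.lt_or_ge i r with h1 | h1
  · -- i < r
    rcases Nat.lt_or_ge j r with h2 | h2
    · -- disjoint: i < j < r < s
      exact (disj (n := n) hij hrs h2).eq
    · -- r < j
      have h2' : r < j := by omega
      rcases Nat.lt_or_ge s j with h3 | h3
      · exact nested h1i h1 hrs h3 hjn
      · -- interleaved i < r < j < s : contradiction
        have h3' : j < s := by omega
        exfalso
        have hp : (0:ℤ) < ((j:ℤ) - r) * ((s:ℤ) - i) * ((r:ℤ) - i) := by
          apply mul_pos (mul_pos _ _) <;> omega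
        have hq : (0:ℤ) < (s:ℤ) - j := by omega
        nlinarith [mul_pos hq hp]
  · -- r < i
    have h1' : r < i := by omega
    rcases Nat.lt_or_ge s i with h2 | h2
    · exact ((disj (n := n) hrs hij h2).eq.symm)
    · have h2' : i < s := by omega
      rcases Nat.lt_or_ge j s with h3 | h3
      · exact (nested h1r h1' hij h3 hsn).symm
      · have h3' : s < j := by omega
        exfalso
        have hp : (0:ℤ) < ((j:ℤ) - r) * ((s:ℤ) - i) * ((i:ℤ) - r) := by
          apply mul_pos (mul_pos _ _) <;> omega
        have hq : (0:ℤ) < (j:ℤ) - s := by omega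
        nlinarith [mul_pos hq hp]
end

section
/- For all indices 1 ≤ i < j < k ≤ n, the following identities hold in B_n: a_{i,j} a_{i,k} = a_{j,k} a_{i,j} = a_{i,k} a_{j,k}. -/
/-- The Birman–Ko–Lee relations, for `(x, y, z) = (a_{i,j}, a_{i,k}, a_{j,k})`. -/
def DualBraidRel {G : Type*} [Mul G] (x y z : G) : Prop :=
  x * y = z * x ∧ z * x = y * z

section Group

variable {G H : Type*} [Group G] [Group H]

theorem DualBraidRel.map {x y z : G} (h : DualBraidRel x y z) (f : G →* H) :
    DualBraidRel (f x) (f y) (f z) := by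
  obtain ⟨hxy, hzx⟩ := h
  exact ⟨by rw [← map_mul, hxy, map_mul], by rw [← map_mul, hzx, map_mul]⟩

theorem dualBraidRel_of_braid {a s : G} (h : a * s * a = s * a * s) :
    DualBraidRel a (s * a * s⁻¹) s := by
  refine ⟨?_, by group⟩
  calc a * (s * a * s⁻¹) = (a * s * a) * s⁻¹ := by group
    _ = s * a := by rw [h]; group

theorem braid_conj_of_braid {a s t : G} (hst : s * t * s = t * s * t)
    (has : a * s * a = s * a * s) (hta : Commute t a) :
    s * a * s⁻¹ * t * (s * a * s⁻¹) = t * (s * a * s⁻¹) * t := by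
  have hs : MulAut.conj (s * t) s = t := by
    rw [MulAut.conj_apply, mul_assoc s t s, ← mul_assoc, hst]; group
  have ha : MulAut.conj (s * t) a = s * a * s⁻¹ := by
    rw [MulAut.conj_apply, mul_assoc s t a, hta.eq]; group
  simpa only [map_mul (MulAut.conj (s * t)), hs, ha] using congrArg (MulAut.conj (s * t)) has

end Group

section BraidGroup

variable {n : ℕ}

theorem genσ_eq_one {i : ℕ} (h : i = 0 ∨ n ≤ i) : genσ n i = 1 :=
  PresentedGroup.one_of_mem (Or.inr (Or.inr ⟨i, h, rfl⟩))

theorem genσ_commute {i j : ℕ} (h : i + 2 ≤ j) : Commute (genσ n i) (genσ n j) := by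
  rcases Nat.eq_zero_or_pos i with rfl | hi
  · rw [genσ_eq_one (Or.inl rfl)]; exact Commute.one_left _
  rcases le_or_gt n j with hj | hj
  · rw [genσ_eq_one (Or.inr hj)]; exact Commute.one_right _
  refine PresentedGroup.mk_eq_mk_of_mul_inv_mem (x := .of i * .of j) (y := .of j * .of i) ?_
  rw [mul_inv_rev, ← mul_assoc]
  exact Or.inl ⟨i, j, hi, h, by omega, rfl⟩

theorem genσ_braid {i : ℕ} (hi : 1 ≤ i) (hn : i + 2 ≤ n) :
    genσ n i * genσ n (i + 1) * genσ n i = genσ n (i + 1) * genσ n i * genσ n (i + 1) :=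
  PresentedGroup.mk_eq_mk_of_mul_inv_mem (Or.inr (Or.inl ⟨i, hi, by omega, rfl⟩))

theorem band_self_succ (i : ℕ) : band n i (i + 1) = genσ n i := by
  simp [band]

theorem band_succ {i j : ℕ} (hij : i < j) :
    band n i (j + 1) = genσ n j * band n i j * (genσ n j)⁻¹ := by
  have hlen : j + 1 - 1 - i = (j - 1 - i) + 1 := by omega
  have hlast : i + 1 + 1 * (j - 1 - i) = j := by omega
  rw [band, band, hlen, List.range'_concat, hlast]
  simp only [List.reverse_append, List.reverse_cons, List.reverse_nil, List.nil_append,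
    List.cons_append, List.map_cons, List.prod_cons, mul_inv_rev]
  group

theorem genσ_commute_band {i j c : ℕ} (hij : i < j) (hjc : j < c) :
    Commute (genσ n c) (band n i j) := by
  induction j, hij using Nat.le_induction with
  | base => rw [band_self_succ]; exact (genσ_commute (by omega)).symm
  | succ j hij ih =>
    rw [band_succ hij]
    have hjc' : Commute (genσ n c) (genσ n j) := (genσ_commute (by omega)).symm
    exact (hjc'.mul_right (ih (by omega))).mul_right hjc'.inv_right

theorem band_braid_genσ {i j : ℕ} (hi : 1 ≤ i) (hij : i < j) (hjn : j < n) :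
    band n i j * genσ n j * band n i j = genσ n j * band n i j * genσ n j := by
  induction j, hij using Nat.le_induction with
  | base => rw [band_self_succ]; exact genσ_braid hi (by omega)
  | succ j hij ih =>
    rw [band_succ hij]
    exact braid_conj_of_braid (genσ_braid (by omega) (by omega)) (ih (by omega))
      (genσ_commute_band hij (Nat.lt_succ_self j))

end BraidGroup

/-- Theorem: for `1 ≤ i < j < k ≤ n`, `a_{i,j} a_{i,k} = a_{j,k} a_{i,j} = a_{i,k} a_{j,k}`
in `B_n`. -/
theorem band_triple_relations (n i j k : ℕ) (h1 : 1 ≤ i) (hij : i < j) (hjk : j < k)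
    (hkn : k ≤ n) :
    band n i j * band n i k = band n j k * band n i j ∧
    band n j k * band n i j = band n i k * band n j k := by
  show DualBraidRel (band n i j) (band n i k) (band n j k)
  induction k, hjk using Nat.le_induction with
  | base =>
    rw [band_succ hij, band_self_succ]
    exact dualBraidRel_of_braid (band_braid_genσ h1 hij (by omega))
  | succ k hjk ih =>
    have hfix : MulAut.conj (genσ n k) (band n i j) = band n i j := by
      rw [MulAut.conj_apply, (genσ_commute_band hij hjk).eq, mul_inv_cancel_right]
    rw [band_succ (hij.trans hjk), band_succ hjk, ← MulAut.conj_apply, ← MulAut.conj_apply,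
      ← hfix]
    exact (ih (by omega)).map (MulAut.conj (genσ n k)).toMonoidHom
end
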